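/- arXiv:1802.06532 — 3 statements merged into one kernel-verified Lean document; each statement's English description precedes it below -/
import Mathlib

section
/- Let P be an irreducible, reversible, and lazy transition matrix on a finite state space V with stationary distribution π. Then the local 2-divergence satisfies Ψ_2(P)^2 ≤ 2 max_{w∈V} π_w / min{π_v P(v,u) : P(v,u) > 0}. -/
/-!
Put `f_t = P^t 𝟙_w`, so that `f_{t+1} = P f_t`, and work in `L²(π)`. Stationarity of `π` gives
the Dirichlet identity `∑_{v,u} π_v P(v,u) (f(v) - f(u))² = 2 (‖f‖² - ⟨f, Pf⟩)`. Laziness makes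
`2P - 1` a stochastic matrix fixing `π`, hence a contraction of `L²(π)` by Jensen, and expanding
`‖(2P - 1) f‖² ≤ ‖f‖²` gives `‖Pf‖² ≤ ⟨f, Pf⟩`. Hence the Dirichlet sum of `f_t` is at most
`2 (‖f_t‖² - ‖f_{t+1}‖²)`, which telescopes over `t` to `2 ‖f_0‖² = 2 π_w`. Finally every edge
term of `Ψ₂(P)²` is at most the corresponding Dirichlet term divided by `pmin`.
-/

open Finset Matrix

section WeightedL2

variable {V : Type*} [Fintype V]

def weightedSqNorm (π f : V → ℝ) : ℝ := ∑ v, π v * f v ^ 2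

def weightedInner (π f g : V → ℝ) : ℝ := ∑ v, π v * f v * g v

def dirichletSum (π : V → ℝ) (P : Matrix V V ℝ) (f : V → ℝ) : ℝ :=
  ∑ v, ∑ u, π v * P v u * (f v - f u) ^ 2

lemma weightedSqNorm_nonneg {π : V → ℝ} (hπ : ∀ v, 0 ≤ π v) (f : V → ℝ) :
    0 ≤ weightedSqNorm π f :=
  sum_nonneg fun v _ => mul_nonneg (hπ v) (sq_nonneg _)

lemma weightedSqNorm_single {π : V → ℝ} [DecidableEq V] (w : V) :
    weightedSqNorm π (Pi.single w 1) = π w := by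
  simp [weightedSqNorm, Pi.single_apply]

lemma sum_sum_mul_apply_of_stationary {π : V → ℝ} {P : Matrix V V ℝ}
    (hstat : ∀ u, ∑ v, π v * P v u = π u) (g : V → ℝ) :
    ∑ v, ∑ u, π v * P v u * g u = ∑ u, π u * g u := by
  rw [sum_comm]
  exact sum_congr rfl fun u _ => by rw [← sum_mul, hstat u]

lemma sq_mulVec_le_sum_mul_sq {Q : Matrix V V ℝ} {v : V} (hnn : ∀ u, 0 ≤ Q v u)
    (hrow : ∑ u, Q v u = 1) (f : V → ℝ) :
    (Q *ᵥ f) v ^ 2 ≤ ∑ u, Q v u * f u ^ 2 := by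
  have hcs := sum_sq_le_sum_mul_sum_of_sq_le_mul univ (r := fun u => Q v u * f u)
    (fun u _ => hnn u) (fun u _ => mul_nonneg (hnn u) (sq_nonneg (f u)))
    (fun u _ => le_of_eq (by ring))
  rwa [hrow, one_mul] at hcs

lemma weightedSqNorm_mulVec_le {π : V → ℝ} {Q : Matrix V V ℝ} (hπ : ∀ v, 0 ≤ π v)
    (hnn : ∀ v u, 0 ≤ Q v u) (hrow : ∀ v, ∑ u, Q v u = 1)
    (hstat : ∀ u, ∑ v, π v * Q v u = π u) (f : V → ℝ) :
    weightedSqNorm π (Q *ᵥ f) ≤ weightedSqNorm π f :=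
  calc ∑ v, π v * (Q *ᵥ f) v ^ 2
      ≤ ∑ v, π v * ∑ u, Q v u * f u ^ 2 :=
        sum_le_sum fun v _ =>
          mul_le_mul_of_nonneg_left (sq_mulVec_le_sum_mul_sq (hnn v) (hrow v) f) (hπ v)
    _ = ∑ v, ∑ u, π v * Q v u * f u ^ 2 := by simp only [mul_sum, mul_assoc]
    _ = ∑ u, π u * f u ^ 2 := sum_sum_mul_apply_of_stationary hstat _

lemma weightedSqNorm_mulVec_le_weightedInner [DecidableEq V] {π : V → ℝ}
    {P : Matrix V V ℝ} (hπ : ∀ v, 0 ≤ π v) (hnn : ∀ v u, 0 ≤ P v u)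
    (hrow : ∀ v, ∑ u, P v u = 1) (hstat : ∀ u, ∑ v, π v * P v u = π u)
    (hlazy : ∀ v, (1 / 2 : ℝ) ≤ P v v) (f : V → ℝ) :
    weightedSqNorm π (P *ᵥ f) ≤ weightedInner π f (P *ᵥ f) := by
  have hQ : ∀ v u, ((2 : ℝ) • P - 1) v u = 2 * P v u - if v = u then 1 else 0 :=
    fun v u => by simp [one_apply]
  have hQnn : ∀ v u, 0 ≤ ((2 : ℝ) • P - 1) v u := by
    intro v u
    rw [hQ]
    split_ifs with hvu
    · subst hvu; linarith [hlazy v]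
    · linarith [hnn v u]
  have hQrow : ∀ v, ∑ u, ((2 : ℝ) • P - 1) v u = 1 := by
    intro v
    simp only [hQ, sum_sub_distrib, ← mul_sum, hrow v, sum_ite_eq, mem_univ, if_true]
    norm_num
  have hQstat : ∀ u, ∑ v, π v * ((2 : ℝ) • P - 1) v u = π u := by
    intro u
    simp only [hQ, mul_sub, sum_sub_distrib, mul_left_comm _ (2 : ℝ), ← mul_sum, hstat u,
      mul_ite, mul_one, mul_zero, sum_ite_eq', mem_univ, if_true]
    ring
  have hQf : ((2 : ℝ) • P - 1) *ᵥ f = (2 : ℝ) • (P *ᵥ f) - f := by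
    rw [sub_mulVec, smul_mulVec, one_mulVec]
  have hcontr := weightedSqNorm_mulVec_le hπ hQnn hQrow hQstat f
  rw [hQf] at hcontr
  have hexpand : weightedSqNorm π ((2 : ℝ) • (P *ᵥ f) - f) = 4 * weightedSqNorm π (P *ᵥ f)
      - 4 * weightedInner π f (P *ᵥ f) + weightedSqNorm π f := by
    simp only [weightedSqNorm, weightedInner, mul_sum, ← sum_sub_distrib, ← sum_add_distrib]
    exact sum_congr rfl fun v _ => by simp only [Pi.sub_apply, Pi.smul_apply, smul_eq_mul]; ring
  linarith

lemma dirichletSum_eq {π : V → ℝ} {P : Matrix V V ℝ} (hrow : ∀ v, ∑ u, P v u = 1)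
    (hstat : ∀ u, ∑ v, π v * P v u = π u) (f : V → ℝ) :
    dirichletSum π P f = 2 * (weightedSqNorm π f - weightedInner π f (P *ᵥ f)) := by
  have hsplit : dirichletSum π P f = ∑ v, ∑ u, π v * f v ^ 2 * P v u
      - 2 * ∑ v, ∑ u, π v * f v * (P v u * f u) + ∑ v, ∑ u, π v * P v u * f u ^ 2 := by
    simp only [dirichletSum, mul_sum, ← sum_sub_distrib, ← sum_add_distrib]
    exact sum_congr rfl fun v _ => sum_congr rfl fun u _ => by ring
  have hdiag : ∑ v, ∑ u, π v * f v ^ 2 * P v u = weightedSqNorm π f :=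
    sum_congr rfl fun v _ => by rw [← mul_sum, hrow v, mul_one]
  have hcross : ∑ v, ∑ u, π v * f v * (P v u * f u) = weightedInner π f (P *ᵥ f) :=
    sum_congr rfl fun v _ => by rw [← mul_sum]; rfl
  rw [hsplit, hdiag, hcross, sum_sum_mul_apply_of_stationary hstat, weightedSqNorm]
  ring

lemma dirichletSum_le_two_mul_sub [DecidableEq V] {π : V → ℝ} {P : Matrix V V ℝ}
    (hπ : ∀ v, 0 ≤ π v) (hnn : ∀ v u, 0 ≤ P v u) (hrow : ∀ v, ∑ u, P v u = 1)
    (hstat : ∀ u, ∑ v, π v * P v u = π u) (hlazy : ∀ v, (1 / 2 : ℝ) ≤ P v v) (f : V → ℝ) :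
    dirichletSum π P f ≤ 2 * (weightedSqNorm π f - weightedSqNorm π (P *ᵥ f)) := by
  rw [dirichletSum_eq hrow hstat]
  linarith [weightedSqNorm_mulVec_le_weightedInner hπ hnn hrow hstat hlazy f]

lemma sum_range_dirichletSum_pow_mulVec_le [DecidableEq V] {π : V → ℝ} {P : Matrix V V ℝ}
    (hπ : ∀ v, 0 ≤ π v) (hnn : ∀ v u, 0 ≤ P v u) (hrow : ∀ v, ∑ u, P v u = 1)
    (hstat : ∀ u, ∑ v, π v * P v u = π u) (hlazy : ∀ v, (1 / 2 : ℝ) ≤ P v v)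
    (f : V → ℝ) (T : ℕ) :
    ∑ t ∈ range T, dirichletSum π P (P ^ t *ᵥ f) ≤ 2 * weightedSqNorm π f := by
  set N : ℕ → ℝ := fun t => weightedSqNorm π (P ^ t *ᵥ f)
  calc ∑ t ∈ range T, dirichletSum π P (P ^ t *ᵥ f)
      ≤ ∑ t ∈ range T, 2 * (N t - N (t + 1)) :=
        sum_le_sum fun t _ => by
          simpa only [N, pow_succ', ← mulVec_mulVec] using
            dirichletSum_le_two_mul_sub hπ hnn hrow hstat hlazy (P ^ t *ᵥ f)
    _ = 2 * (N 0 - N T) := by rw [← mul_sum, sum_range_sub']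
    _ ≤ 2 * weightedSqNorm π f := by
        simp only [N, pow_zero, one_mulVec]
        linarith [weightedSqNorm_nonneg hπ (P ^ T *ᵥ f)]

lemma mul_sum_edges_le_dirichletSum {π : V → ℝ} {P : Matrix V V ℝ} {pmin : ℝ}
    (hπ : ∀ v, 0 ≤ π v) (hnn : ∀ v u, 0 ≤ P v u)
    (hpmin : ∀ v u, 0 < P v u → pmin ≤ π v * P v u) (f : V → ℝ) :
    pmin * ∑ v, ∑ u, (if 0 < P v u then (f v - f u) ^ 2 else 0) ≤ dirichletSum π P f := by
  simp only [mul_sum]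
  refine sum_le_sum fun v _ => sum_le_sum fun u _ => ?_
  split_ifs with hvu
  · exact mul_le_mul_of_nonneg_right (hpmin v u hvu) (sq_nonneg _)
  · rw [mul_zero]
    exact mul_nonneg (mul_nonneg (hπ v) (hnn v u)) (sq_nonneg _)

end WeightedL2

theorem local_two_divergence_bound_general
    {V : Type*} [Fintype V] [DecidableEq V]
    (P : Matrix V V ℝ) (π : V → ℝ)
    (hnn : ∀ v u, 0 ≤ P v u) (hrow : ∀ v, ∑ u, P v u = 1)
    (hπnn : ∀ v, 0 ≤ π v)
    (hstat : ∀ u, ∑ v, π v * P v u = π u)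
    (hlazy : ∀ v, (1 / 2 : ℝ) ≤ P v v)
    (πmax pmin : ℝ)
    (hπmax : ∀ v, π v ≤ πmax)
    (hpmin : ∀ v u, 0 < P v u → pmin ≤ π v * P v u)
    (hpminpos : 0 < pmin)
    (w : V) :
    Summable (fun t : ℕ =>
      ∑ v, ∑ u, if 0 < P v u then ((P ^ t) v w - (P ^ t) u w) ^ 2 else 0) ∧
    (∑' t : ℕ,
      ∑ v, ∑ u, if 0 < P v u then ((P ^ t) v w - (P ^ t) u w) ^ 2 else 0)
      ≤ 2 * πmax / pmin := by
  set S : ℕ → ℝ := fun t =>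
    ∑ v, ∑ u, if 0 < P v u then ((P ^ t) v w - (P ^ t) u w) ^ 2 else 0
  have hS_nonneg : ∀ t, 0 ≤ S t := fun t =>
    sum_nonneg fun v _ => sum_nonneg fun u _ => by positivity
  have hcol : ∀ t, P ^ t *ᵥ Pi.single w 1 = fun v => (P ^ t) v w := fun t => by
    rw [mulVec_single_one]; rfl
  have hpartial : ∀ T, ∑ t ∈ range T, S t ≤ 2 * πmax / pmin := by
    intro T
    rw [le_div_iff₀' hpminpos, mul_sum]
    calc ∑ t ∈ range T, pmin * S t
        ≤ ∑ t ∈ range T, dirichletSum π P (P ^ t *ᵥ Pi.single w 1) :=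
          sum_le_sum fun t _ => by
            simpa only [hcol] using mul_sum_edges_le_dirichletSum hπnn hnn hpmin _
      _ ≤ 2 * weightedSqNorm π (Pi.single w 1) :=
          sum_range_dirichletSum_pow_mulVec_le hπnn hnn hrow hstat hlazy _ T
      _ ≤ 2 * πmax := by rw [weightedSqNorm_single]; linarith [hπmax w]
  have hsummable : Summable S := summable_of_sum_range_le hS_nonneg hpartial
  exact ⟨hsummable, hsummable.tsum_le_of_sum_range_le hpartial⟩

/-- General upper bound on the local 2-divergence:
    Ψ₂(P)² ≤ 2 max_w π_w / min{π_v P(v,u) : P(v,u) > 0},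
    for P irreducible, reversible and lazy. -/
theorem local_two_divergence_bound
    {V : Type*} [Fintype V] [DecidableEq V] [Nonempty V]
    (P : Matrix V V ℝ) (π : V → ℝ)
    (hnn : ∀ v u, 0 ≤ P v u) (hrow : ∀ v, ∑ u, P v u = 1)
    (hπnn : ∀ v, 0 ≤ π v) (hπsum : ∑ v, π v = 1)
    (hstat : ∀ u, ∑ v, π v * P v u = π u)
    (hrev : ∀ v u, π v * P v u = π u * P u v)
    (hirr : ∀ v u, ∃ t : ℕ, 0 < (P ^ t) v u)
    (hlazy : ∀ v, (1 / 2 : ℝ) ≤ P v v)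
    (πmax pmin : ℝ)
    (hπmax : ∀ v, π v ≤ πmax)
    (hpmin : ∀ v u, 0 < P v u → pmin ≤ π v * P v u)
    (hpminpos : 0 < pmin)
    (w : V) :
    Summable (fun t : ℕ =>
      ∑ v, ∑ u, if 0 < P v u then ((P ^ t) v w - (P ^ t) u w) ^ 2 else 0) ∧
    (∑' t : ℕ,
      ∑ v, ∑ u, if 0 < P v u then ((P ^ t) v w - (P ^ t) u w) ^ 2 else 0)
      ≤ 2 * πmax / pmin :=
  local_two_divergence_bound_general P π hnn hrow hπnn hstat hlazy πmax pmin hπmax hpmin hpminpos w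
end

section
/- Let P be an irreducible, symmetric, and lazy transition matrix on a finite state space V of N states. Then Ψ_2(P)^2 ≤ 2 / min{P(v,u) : P(v,u) > 0}. -/
/-!
Let `f t` be the column `w` of `P ^ t`, so `f (t + 1) = P *ᵥ f t`. Laziness makes `2 • P - 1`
doubly stochastic, hence an `ℓ²`-contraction, which amounts to `‖P f‖² ≤ ⟨f, P f⟩`. Combined with
the Dirichlet identity `∑ P v u (f v - f u)² = 2 (‖f‖² - ⟨f, P f⟩)`, the `t`-th term of the series,
multiplied by `pmin`, is at most `2 (‖f t‖² - ‖f (t + 1)‖²)`; these bounds telescope to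
`2 ‖f 0‖² = 2`.
-/

open Finset Matrix

namespace Matrix

variable {n : Type*} [Fintype n]

theorem sum_mul_sub_sq_eq {R : Type*} [CommRing R] {M : Matrix n n R}
    (hrow : ∀ i, ∑ j, M i j = 1) (hcol : ∀ j, ∑ i, M i j = 1) (x : n → R) :
    ∑ i, ∑ j, M i j * (x i - x j) ^ 2 = 2 * (x ⬝ᵥ x - x ⬝ᵥ M *ᵥ x) := by
  have expand (i j : n) : M i j * (x i - x j) ^ 2 =
      M i j * x i ^ 2 + M i j * x j ^ 2 - 2 * (x i * (M i j * x j)) := by ring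
  have first : ∑ i, ∑ j, M i j * x i ^ 2 = x ⬝ᵥ x := by
    simp only [← sum_mul, hrow, one_mul, dotProduct, sq]
  have second : ∑ i, ∑ j, M i j * x j ^ 2 = x ⬝ᵥ x := by
    rw [sum_comm]; simp only [← sum_mul, hcol, one_mul, dotProduct, sq]
  simp only [expand, sum_sub_distrib, sum_add_distrib, first, second, ← mul_sum, dotProduct,
    mulVec]
  ring

variable [DecidableEq n]

theorem dotProduct_mulVec_self_le_of_mem_doublyStochastic {M : Matrix n n ℝ}
    (hM : M ∈ doublyStochastic ℝ n) (x : n → ℝ) :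
    (M *ᵥ x) ⬝ᵥ (M *ᵥ x) ≤ x ⬝ᵥ x := by
  have jensen (i : n) : (M *ᵥ x) i ^ 2 ≤ ∑ j, M i j * x j ^ 2 := by
    simpa [mulVec, dotProduct] using
      (even_two.convexOn_pow (𝕜 := ℝ)).map_sum_le (t := univ) (w := M i) (p := x)
        (fun j _ => hM.1 i j) (sum_row_of_mem_doublyStochastic hM i) (fun j _ => Set.mem_univ _)
  calc (M *ᵥ x) ⬝ᵥ (M *ᵥ x) = ∑ i, (M *ᵥ x) i ^ 2 := by simp only [dotProduct, sq]
    _ ≤ ∑ i, ∑ j, M i j * x j ^ 2 := sum_le_sum fun i _ => jensen i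
    _ = ∑ j, (∑ i, M i j) * x j ^ 2 := by rw [sum_comm]; simp only [sum_mul]
    _ = x ⬝ᵥ x := by simp only [sum_col_of_mem_doublyStochastic hM, one_mul, dotProduct, sq]

theorem two_smul_sub_one_mem_doublyStochastic {P : Matrix n n ℝ}
    (hP : P ∈ doublyStochastic ℝ n) (hlazy : ∀ i, 1 / 2 ≤ P i i) :
    (2 : ℝ) • P - 1 ∈ doublyStochastic ℝ n := by
  rw [mem_doublyStochastic_iff_sum] at hP ⊢
  obtain ⟨hnn, hrow, hcol⟩ := hP
  refine ⟨fun i j => ?_, fun i => ?_, fun j => ?_⟩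
  · rcases eq_or_ne i j with rfl | hij
    · simp only [sub_apply, smul_apply, one_apply_eq, smul_eq_mul]; linarith [hlazy i]
    · simp only [sub_apply, smul_apply, one_apply_ne hij, smul_eq_mul]; linarith [hnn i j]
  · simp only [sub_apply, smul_apply, smul_eq_mul, one_apply, sum_sub_distrib, ← mul_sum, hrow,
      mul_one, sum_ite_eq, mem_univ, if_true]
    norm_num
  · simp only [sub_apply, smul_apply, smul_eq_mul, one_apply, sum_sub_distrib, ← mul_sum, hcol,
      mul_one, sum_ite_eq', mem_univ, if_true]
    norm_num

theorem dotProduct_mulVec_self_le_dotProduct_mulVec_of_lazy {P : Matrix n n ℝ}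
    (hP : P ∈ doublyStochastic ℝ n) (hlazy : ∀ i, 1 / 2 ≤ P i i) (x : n → ℝ) :
    (P *ᵥ x) ⬝ᵥ (P *ᵥ x) ≤ x ⬝ᵥ P *ᵥ x := by
  have h := dotProduct_mulVec_self_le_of_mem_doublyStochastic
    (two_smul_sub_one_mem_doublyStochastic hP hlazy) x
  simp only [sub_mulVec, smul_mulVec, one_mulVec, dotProduct_sub, sub_dotProduct,
    smul_dotProduct, dotProduct_smul, smul_eq_mul, dotProduct_comm (P *ᵥ x) x] at h
  linarith

theorem sum_mul_sub_sq_le_of_lazy {P : Matrix n n ℝ}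
    (hP : P ∈ doublyStochastic ℝ n) (hlazy : ∀ i, 1 / 2 ≤ P i i) (x : n → ℝ) :
    ∑ i, ∑ j, P i j * (x i - x j) ^ 2 ≤ 2 * (x ⬝ᵥ x - (P *ᵥ x) ⬝ᵥ (P *ᵥ x)) := by
  rw [sum_mul_sub_sq_eq (sum_row_of_mem_doublyStochastic hP) (sum_col_of_mem_doublyStochastic hP)]
  linarith [dotProduct_mulVec_self_le_dotProduct_mulVec_of_lazy hP hlazy x]

end Matrix

theorem mul_sum_ite_pos_le_sum_mul {ι : Type*} (s : Finset ι) {p g : ι → ℝ} {c : ℝ}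
    (hp : ∀ i ∈ s, 0 ≤ p i) (hc : ∀ i ∈ s, 0 < p i → c ≤ p i) (hg : ∀ i ∈ s, 0 ≤ g i) :
    c * ∑ i ∈ s, (if 0 < p i then g i else 0) ≤ ∑ i ∈ s, p i * g i := by
  rw [mul_sum]
  refine sum_le_sum fun i hi => ?_
  split_ifs with hpos
  · exact mul_le_mul_of_nonneg_right (hc i hi hpos) (hg i hi)
  · rw [mul_zero]; exact mul_nonneg (hp i hi) (hg i hi)

theorem summable_and_tsum_le_of_mul_le_sub_succ {S a : ℕ → ℝ} {c : ℝ} (hc : 0 < c)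
    (hS : ∀ t, 0 ≤ S t) (ha : ∀ t, 0 ≤ a t) (h : ∀ t, c * S t ≤ a t - a (t + 1)) :
    Summable S ∧ ∑' t, S t ≤ a 0 / c := by
  have partial_sums (T : ℕ) : ∑ t ∈ range T, S t ≤ a 0 / c := by
    rw [le_div_iff₀ hc, sum_mul]
    calc ∑ t ∈ range T, S t * c ≤ ∑ t ∈ range T, (a t - a (t + 1)) :=
          sum_le_sum fun t _ => by rw [mul_comm]; exact h t
      _ = a 0 - a T := sum_range_sub' a T
      _ ≤ a 0 := sub_le_self _ (ha T)
  have hsum := summable_of_sum_range_le hS partial_sums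
  exact ⟨hsum, hsum.tsum_le_of_sum_range_le partial_sums⟩

theorem local_two_divergence_bound_symmetric_general
    {V : Type*} [Fintype V] [DecidableEq V]
    (P : Matrix V V ℝ)
    (hnn : ∀ v u, 0 ≤ P v u) (hrow : ∀ v, ∑ u, P v u = 1)
    (hsym : ∀ v u, P v u = P u v)
    (hlazy : ∀ v, (1 / 2 : ℝ) ≤ P v v)
    (pmin : ℝ)
    (hpmin : ∀ v u, 0 < P v u → pmin ≤ P v u)
    (hpminpos : 0 < pmin)
    (w : V) :
    Summable (fun t : ℕ =>
      ∑ v, ∑ u, if 0 < P v u then ((P ^ t) v w - (P ^ t) u w) ^ 2 else 0) ∧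
    (∑' t : ℕ,
      ∑ v, ∑ u, if 0 < P v u then ((P ^ t) v w - (P ^ t) u w) ^ 2 else 0)
      ≤ 2 / pmin := by
  have hP : P ∈ doublyStochastic ℝ V := mem_doublyStochastic_iff_sum.2
    ⟨hnn, hrow, fun u => by simpa only [hsym _ u] using hrow u⟩
  set f : ℕ → V → ℝ := fun t => (P ^ t).col w with hf
  have hf_succ (t : ℕ) : f (t + 1) = P *ᵥ f t := by
    simp only [hf, pow_succ', ← mulVec_single_one, mulVec_mulVec]
  have hf_zero : f 0 ⬝ᵥ f 0 = 1 := by simp [hf, dotProduct, one_apply]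
  have step (t : ℕ) : pmin * ∑ v, ∑ u, (if 0 < P v u then (f t v - f t u) ^ 2 else 0) ≤
      2 * (f t ⬝ᵥ f t) - 2 * (f (t + 1) ⬝ᵥ f (t + 1)) := by
    calc _ ≤ ∑ v, ∑ u, P v u * (f t v - f t u) ^ 2 := by
          rw [mul_sum]
          exact sum_le_sum fun v _ => mul_sum_ite_pos_le_sum_mul _ (fun u _ => hnn v u)
            (fun u _ => hpmin v u) (fun u _ => sq_nonneg _)
      _ ≤ _ := by rw [hf_succ, ← mul_sub]; exact sum_mul_sub_sq_le_of_lazy hP hlazy (f t)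
  have key := summable_and_tsum_le_of_mul_le_sub_succ (a := fun t => 2 * (f t ⬝ᵥ f t)) hpminpos
    (fun t => sum_nonneg fun v _ => sum_nonneg fun u _ => by split_ifs <;> positivity)
    (fun t => mul_nonneg zero_le_two (sum_nonneg fun v _ => mul_self_nonneg (f t v))) step
  rwa [hf_zero, mul_one] at key

/-- For an irreducible, symmetric, lazy stochastic matrix P,
    Ψ₂(P)² ≤ 2 / min{P(v,u) : P(v,u) > 0}. -/
theorem local_two_divergence_bound_symmetric
    {V : Type*} [Fintype V] [DecidableEq V] [Nonempty V]
    (P : Matrix V V ℝ)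
    (hnn : ∀ v u, 0 ≤ P v u) (hrow : ∀ v, ∑ u, P v u = 1)
    (hsym : ∀ v u, P v u = P u v)
    (hirr : ∀ v u, ∃ t : ℕ, 0 < (P ^ t) v u)
    (hlazy : ∀ v, (1 / 2 : ℝ) ≤ P v v)
    (pmin : ℝ)
    (hpmin : ∀ v u, 0 < P v u → pmin ≤ P v u)
    (hpminpos : 0 < pmin)
    (w : V) :
    Summable (fun t : ℕ =>
      ∑ v, ∑ u, if 0 < P v u then ((P ^ t) v w - (P ^ t) u w) ^ 2 else 0) ∧
    (∑' t : ℕ,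
      ∑ v, ∑ u, if 0 < P v u then ((P ^ t) v w - (P ^ t) u w) ^ 2 else 0)
      ≤ 2 / pmin :=
  local_two_divergence_bound_symmetric_general P hnn hrow hsym hlazy pmin hpmin hpminpos w
end

section
/- Let G = (V,E) be a connected d-regular graph and let P be the lazy random walk transition matrix: P(v,u) = 1/(2d) for {v,u} ∈ E, P(v,v) = 1/2, and P(v,u) = 0 otherwise. Then Ψ_2(P) ≤ 2√d. -/
/-!
Write `f_t = Pᵗ e_w`. Because `P` is lazy, `P = (1 + K) / 2` with `K = d⁻¹ A` a symmetric
sub-stochastic matrix, hence an `ℓ²` contraction, and this gives `‖P f‖² ≤ ⟪f, P f⟫`. So the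
Dirichlet energies `⟪f_t, (1 - P) f_t⟫` are bounded by the decrements `‖f_t‖² - ‖f_{t+1}‖²`,
and their sum telescopes to at most `‖e_w‖² = 1`. The `t`-th term of `Ψ₂` is the Laplacian
quadratic form `2 ⟪f_t, L f_t⟫`, and `L = 2d (1 - P)`, so the whole series is at most `4d`.
-/

open Finset Matrix

namespace Matrix

variable {n : Type*} [Fintype n]

theorem mulVec_dotProduct_self_le {M : Matrix n n ℝ} (hM : M.IsSymm) (h0 : ∀ i j, 0 ≤ M i j)
    (h1 : ∀ i, ∑ j, M i j ≤ 1) (x : n → ℝ) : M *ᵥ x ⬝ᵥ M *ᵥ x ≤ x ⬝ᵥ x := by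
  have hrow (i : n) : (M *ᵥ x) i ^ 2 ≤ ∑ j, M i j * x j ^ 2 := by
    have hw : 0 ≤ ∑ j, M i j * x j ^ 2 := sum_nonneg fun j _ => by have := h0 i j; positivity
    calc (M *ᵥ x) i ^ 2 = (∑ j, M i j * x j) ^ 2 := rfl
      _ ≤ (∑ j, M i j) * ∑ j, M i j * x j ^ 2 :=
          sum_sq_le_sum_mul_sum_of_sq_le_mul _ (fun j _ => h0 i j)
            (fun j _ => by have := h0 i j; positivity) fun j _ => le_of_eq (by ring)
      _ ≤ ∑ j, M i j * x j ^ 2 := mul_le_of_le_one_left hw (h1 i)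
  calc M *ᵥ x ⬝ᵥ M *ᵥ x = ∑ i, (M *ᵥ x) i ^ 2 := by simp only [dotProduct, sq]
    _ ≤ ∑ i, ∑ j, M i j * x j ^ 2 := sum_le_sum fun i _ => hrow i
    _ = ∑ j, (∑ i, M j i) * x j ^ 2 := by
        rw [sum_comm]
        simp only [sum_mul, fun i j => hM.apply j i]
    _ ≤ ∑ j, x j ^ 2 := sum_le_sum fun j _ => mul_le_of_le_one_left (sq_nonneg _) (h1 j)
    _ = x ⬝ᵥ x := by simp only [dotProduct, sq]

theorem mulVec_dotProduct_self_le_dotProduct_mulVec [DecidableEq n] {P : Matrix n n ℝ}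
    {x : n → ℝ} (h : ((2 : ℝ) • P - 1) *ᵥ x ⬝ᵥ ((2 : ℝ) • P - 1) *ᵥ x ≤ x ⬝ᵥ x) :
    P *ᵥ x ⬝ᵥ P *ᵥ x ≤ x ⬝ᵥ P *ᵥ x := by
  simp only [sub_mulVec, smul_mulVec, one_mulVec, dotProduct_sub, sub_dotProduct,
    dotProduct_smul, smul_dotProduct, smul_eq_mul, dotProduct_comm (P *ᵥ x) x] at h
  linarith

theorem sum_range_dotProduct_one_sub_mulVec_pow_le [DecidableEq n] {P : Matrix n n ℝ}
    (h : ∀ y, P *ᵥ y ⬝ᵥ P *ᵥ y ≤ y ⬝ᵥ P *ᵥ y) (x : n → ℝ) (T : ℕ) :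
    ∑ t ∈ range T, P ^ t *ᵥ x ⬝ᵥ (1 - P) *ᵥ (P ^ t *ᵥ x) ≤ x ⬝ᵥ x := by
  set f : ℕ → ℝ := fun t => P ^ t *ᵥ x ⬝ᵥ P ^ t *ᵥ x
  have hstep (t : ℕ) : P ^ t *ᵥ x ⬝ᵥ (1 - P) *ᵥ (P ^ t *ᵥ x) ≤ f t - f (t + 1) := by
    have := h (P ^ t *ᵥ x)
    simp only [f, pow_succ', ← mulVec_mulVec, sub_mulVec, one_mulVec, dotProduct_sub]
    linarith
  calc _ ≤ ∑ t ∈ range T, (f t - f (t + 1)) := sum_le_sum fun t _ => hstep t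
    _ = x ⬝ᵥ x - f T := by simp only [sum_range_sub', f, pow_zero, one_mulVec]
    _ ≤ x ⬝ᵥ x := sub_le_self _ (dotProduct_self_star_nonneg _)

end Matrix

namespace SimpleGraph

variable {V : Type*} {G : SimpleGraph V} [DecidableRel G.Adj] {d : ℕ}

theorem IsRegularOfDegree.cast_pos_of_adj [Fintype V] (hG : G.IsRegularOfDegree d) {v u : V}
    (h : G.Adj v u) : (0 : ℝ) < d := by
  rw [← hG v]
  exact_mod_cast G.degree_pos_iff_exists_adj v |>.mpr ⟨u, h⟩

variable [DecidableEq V]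

variable (G) in
/-- The lazy random walk of a graph all of whose degrees are `d`. -/
noncomputable def lazyWalkMatrix (d : ℕ) : Matrix V V ℝ :=
  Matrix.of fun v u => if G.Adj v u then 1 / (2 * (d : ℝ)) else if v = u then 1 / 2 else 0

theorem two_smul_lazyWalkMatrix_sub_one :
    (2 : ℝ) • G.lazyWalkMatrix d - 1 = (d : ℝ)⁻¹ • G.adjMatrix ℝ := by
  ext v u
  rcases eq_or_ne v u with rfl | hvu
  · simp [lazyWalkMatrix]
  · simp only [lazyWalkMatrix, Matrix.sub_apply, Matrix.smul_apply, of_apply, one_apply_ne hvu,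
      adjMatrix_apply, if_neg hvu, smul_eq_mul]
    split_ifs <;> ring

variable [Fintype V]

theorem IsRegularOfDegree.lapMatrix_eq (hG : G.IsRegularOfDegree d) :
    G.lapMatrix ℝ = (2 * d : ℝ) • (1 - G.lazyWalkMatrix d) := by
  ext v u
  simp only [lapMatrix, degMatrix, lazyWalkMatrix, Matrix.sub_apply, Matrix.smul_apply,
    diagonal_apply, one_apply, of_apply, adjMatrix_apply, smul_eq_mul, hG v]
  by_cases hadj : G.Adj v u
  · have := (hG.cast_pos_of_adj hadj).ne'
    simp only [if_pos hadj, if_neg (G.ne_of_adj hadj)]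
    field_simp
    ring
  · split_ifs <;> ring

theorem IsRegularOfDegree.lazyWalkMatrix_pos_iff (hG : G.IsRegularOfDegree d) {v u : V}
    (hvu : v ≠ u) : 0 < G.lazyWalkMatrix d v u ↔ G.Adj v u := by
  by_cases hadj : G.Adj v u
  · have := hG.cast_pos_of_adj hadj
    simp only [lazyWalkMatrix, of_apply, hadj, if_true, iff_true]
    positivity
  · simp [lazyWalkMatrix, hadj, hvu]

theorem IsRegularOfDegree.lazyWalkMatrix_mulVec_dotProduct_self_le
    (hG : G.IsRegularOfDegree d) (x : V → ℝ) :
    G.lazyWalkMatrix d *ᵥ x ⬝ᵥ G.lazyWalkMatrix d *ᵥ x ≤ x ⬝ᵥ G.lazyWalkMatrix d *ᵥ x := by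
  refine mulVec_dotProduct_self_le_dotProduct_mulVec ?_
  rw [two_smul_lazyWalkMatrix_sub_one]
  refine mulVec_dotProduct_self_le (G.isSymm_adjMatrix.smul _) (fun v u => ?_) (fun v => ?_) x
  · simp only [Matrix.smul_apply, adjMatrix_apply, smul_eq_mul]
    positivity
  · simp only [Matrix.smul_apply, adjMatrix_apply, smul_eq_mul, ← mul_sum,
      ← degree_eq_sum_if_adj, hG v]
    exact inv_mul_le_one_of_le₀ le_rfl d.cast_nonneg

theorem IsRegularOfDegree.sum_ite_lazyWalkMatrix_pos_sq_sub (hG : G.IsRegularOfDegree d)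
    (x : V → ℝ) :
    ∑ v, ∑ u, (if 0 < G.lazyWalkMatrix d v u then (x v - x u) ^ 2 else 0)
      = 4 * d * (x ⬝ᵥ (1 - G.lazyWalkMatrix d) *ᵥ x) := by
  have hif (v u : V) : (if 0 < G.lazyWalkMatrix d v u then (x v - x u) ^ 2 else 0)
      = if G.Adj v u then (x v - x u) ^ 2 else 0 := by
    by_cases hvu : v = u
    · simp [hvu]
    · simp only [hG.lazyWalkMatrix_pos_iff hvu]
  have hlap := G.lapMatrix_toLinearMap₂' ℝ x
  rw [toLinearMap₂'_apply', hG.lapMatrix_eq, smul_mulVec, dotProduct_smul, smul_eq_mul] at hlap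
  simp only [hif]
  linarith

end SimpleGraph

theorem local_two_divergence_lazy_regular_general
    {V : Type*} [Fintype V] [DecidableEq V]
    (G : SimpleGraph V) [DecidableRel G.Adj]
    (d : ℕ) (hreg : ∀ v, G.degree v = d)
    (P : Matrix V V ℝ)
    (hP : ∀ v u, P v u =
      if G.Adj v u then 1 / (2 * (d : ℝ)) else if v = u then 1 / 2 else 0)
    (w : V) :
    Summable (fun t : ℕ =>
      ∑ v, ∑ u, if 0 < P v u then ((P ^ t) v w - (P ^ t) u w) ^ 2 else 0) ∧
    Real.sqrt (∑' t : ℕ,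
      ∑ v, ∑ u, if 0 < P v u then ((P ^ t) v w - (P ^ t) u w) ^ 2 else 0)
      ≤ 2 * Real.sqrt d := by
  have hG : G.IsRegularOfDegree d := hreg
  have hPG : P = G.lazyWalkMatrix d := Matrix.ext hP
  have hcontr := hG.lazyWalkMatrix_mulVec_dotProduct_self_le
  have henergy := hG.sum_ite_lazyWalkMatrix_pos_sq_sub
  rw [← hPG] at hcontr henergy
  set s : ℕ → ℝ := fun t =>
    ∑ v, ∑ u, if 0 < P v u then ((P ^ t) v w - (P ^ t) u w) ^ 2 else 0
  have hs_nonneg (t : ℕ) : 0 ≤ s t :=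
    sum_nonneg fun v _ => sum_nonneg fun u _ => by split_ifs <;> positivity
  have hs_le (T : ℕ) : ∑ t ∈ range T, s t ≤ 4 * d := by
    have htel := sum_range_dotProduct_one_sub_mulVec_pow_le hcontr (Pi.single w 1) T
    simp only [mulVec_single_one, dotProduct_single, Pi.single_eq_same, mul_one] at htel
    simp only [s, henergy, ← mul_sum]
    exact mul_le_of_le_one_right (by positivity) htel
  refine ⟨summable_of_sum_range_le hs_nonneg hs_le, ?_⟩
  calc √(∑' t, s t) ≤ √(4 * d) := Real.sqrt_le_sqrt (Real.tsum_le_of_sum_range_le hs_nonneg hs_le)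
    _ = 2 * √d := by
      rw [Real.sqrt_mul' _ d.cast_nonneg, show (4 : ℝ) = 2 ^ 2 by norm_num,
        Real.sqrt_sq zero_le_two]

/-- For the lazy random walk on a connected d-regular graph, Ψ₂(P) ≤ 2√d. -/
theorem local_two_divergence_lazy_regular
    {V : Type*} [Fintype V] [DecidableEq V]
    (G : SimpleGraph V) [DecidableRel G.Adj]
    (hconn : G.Connected)
    (d : ℕ) (hreg : ∀ v, G.degree v = d)
    (P : Matrix V V ℝ)
    (hP : ∀ v u, P v u =
      if G.Adj v u then 1 / (2 * (d : ℝ)) else if v = u then 1 / 2 else 0)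
    (w : V) :
    Summable (fun t : ℕ =>
      ∑ v, ∑ u, if 0 < P v u then ((P ^ t) v w - (P ^ t) u w) ^ 2 else 0) ∧
    Real.sqrt (∑' t : ℕ,
      ∑ v, ∑ u, if 0 < P v u then ((P ^ t) v w - (P ^ t) u w) ^ 2 else 0)
      ≤ 2 * Real.sqrt d :=
  local_two_divergence_lazy_regular_general G d hreg P hP w
end
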